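/- arXiv:math/0312328 — 4 statements merged into one kernel-verified Lean document; each statement's English description precedes it below -/
import Mathlib

section
/- Let T be a measure-preserving map on a probability space (X, ℱ, μ) and ζ a finite measurable partition of X. For every n ≥ 1 and every x ∈ X one has τ(ζ_{n-1}(Tx)) ≤ τ(ζ_n(x)); consequently the lower and upper local rates of Poincaré recurrence are sub-invariant: R̲_ζ(Tx) ≤ R̲_ζ(x) and R̄_ζ(Tx) ≤ R̄_ζ(x) for all x ∈ X. -/
open MeasureTheory Filter Set
open scoped ENNReal

/-- The Poincaré recurrence of a set `U` : `τ(U) = inf {k ≥ 1 : T^k U ∩ U ≠ ∅}`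
(`∞` if no such `k` exists). -/
noncomputable def recOfSet {X : Type*} (T : X → X) (U : Set X) : ℝ≥0∞ :=
  sInf {t : ℝ≥0∞ | ∃ k : ℕ, 1 ≤ k ∧ (T^[k] '' U ∩ U).Nonempty ∧ t = k}

/-- `refAtom T P n x` is the atom containing `x` of the refined partition
`ζ ∨ T⁻¹ζ ∨ ⋯ ∨ T^{-n+1}ζ`, where `ζ` is the partition of `X` into the fibers
of the map `P`. -/
def refAtom {X ι : Type*} (T : X → X) (P : X → ι) (n : ℕ) (x : X) : Set X :=
  {y | ∀ k < n, P (T^[k] y) = P (T^[k] x)}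

/-- The lower local rate of Poincaré recurrence `R̲_ζ(x) = liminf_n τ(ζ_n(x))/n`. -/
noncomputable def lowerRate {X ι : Type*} (T : X → X) (P : X → ι) (x : X) : ℝ≥0∞ :=
  atTop.liminf fun n : ℕ => recOfSet T (refAtom T P n x) / (n : ℝ≥0∞)

/-- The upper local rate of Poincaré recurrence `R̄_ζ(x) = limsup_n τ(ζ_n(x))/n`. -/
noncomputable def upperRate {X ι : Type*} (T : X → X) (P : X → ι) (x : X) : ℝ≥0∞ :=
  atTop.limsup fun n : ℕ => recOfSet T (refAtom T P n x) / (n : ℝ≥0∞)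

/-!
`T` maps the atom `ζ_{n+1}(x)` into `ζ_n(Tx)` and commutes with its own iterates, so every
return time of `ζ_{n+1}(x)` is a return time of `ζ_n(Tx)`; hence `τ(ζ_n(Tx)) ≤ τ(ζ_{n+1}(x))`.
For the rates, `τ(ζ_n(Tx))/n ≤ (1 + 1/n) · τ(ζ_{n+1}(x))/(n+1)`, and since the factor tends
to `1`, the index shift changes neither the `liminf` nor the `limsup`.
-/

namespace ENNReal

lemma div_natCast_eq_one_add_inv_mul_div_succ (b : ℝ≥0∞) (n : ℕ) :
    b / n = (1 + (n : ℝ≥0∞)⁻¹) * (b / (n + 1 : ℕ)) := by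
  rcases Nat.eq_zero_or_pos n with rfl | hn
  -- both sides are `b * ∞`, since `0⁻¹ = ∞` in `ℝ≥0∞`
  · simp [div_eq_mul_inv, mul_comm]
  have hw : 1 + (n : ℝ≥0∞)⁻¹ = (n + 1) * (n : ℝ≥0∞)⁻¹ := by
    rw [add_mul, ENNReal.mul_inv_cancel (by positivity) (by simp), one_mul, add_comm]
  have hN : ((n : ℝ≥0∞) + 1) * ((n : ℝ≥0∞) + 1)⁻¹ = 1 :=
    ENNReal.mul_inv_cancel (by simp) (by simp)
  calc b / n = b * (n : ℝ≥0∞)⁻¹ * (((n : ℝ≥0∞) + 1) * ((n : ℝ≥0∞) + 1)⁻¹) := by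
        rw [hN, mul_one, div_eq_mul_inv]
    _ = _ := by rw [Nat.cast_succ, hw, div_eq_mul_inv]; ring

lemma tendsto_one_add_inv_natCast : Tendsto (fun n : ℕ ↦ 1 + (n : ℝ≥0∞)⁻¹) atTop (nhds 1) := by
  simpa using tendsto_const_nhds.add ENNReal.tendsto_inv_nat_nhds_zero

variable {u v : ℕ → ℝ≥0∞}

lemma liminf_div_natCast_le_of_le_succ (h : ∀ n, u n ≤ v (n + 1)) :
    atTop.liminf (fun n : ℕ ↦ u n / n) ≤ atTop.liminf (fun n : ℕ ↦ v n / n) := by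
  have hlim := tendsto_one_add_inv_natCast.limsup_eq
  calc atTop.liminf (fun n : ℕ ↦ u n / n)
      ≤ atTop.liminf ((fun n : ℕ ↦ 1 + (n : ℝ≥0∞)⁻¹) * fun n ↦ v (n + 1) / (n + 1 : ℕ)) :=
        liminf_le_liminf (.of_forall fun n ↦
          (ENNReal.div_le_div_right (h n) n).trans_eq (div_natCast_eq_one_add_inv_mul_div_succ _ n))
    _ ≤ atTop.limsup (fun n : ℕ ↦ 1 + (n : ℝ≥0∞)⁻¹) *
          atTop.liminf (fun n : ℕ ↦ v (n + 1) / (n + 1 : ℕ)) :=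
        ENNReal.liminf_mul_le (by simp [hlim]) (by simp [hlim])
    _ = atTop.liminf (fun n : ℕ ↦ v n / n) := by
        rw [hlim, one_mul, liminf_nat_add (fun n : ℕ ↦ v n / n) 1]

lemma limsup_div_natCast_le_of_le_succ (h : ∀ n, u n ≤ v (n + 1)) :
    atTop.limsup (fun n : ℕ ↦ u n / n) ≤ atTop.limsup (fun n : ℕ ↦ v n / n) := by
  have hlim := tendsto_one_add_inv_natCast.limsup_eq
  calc atTop.limsup (fun n : ℕ ↦ u n / n)
      ≤ atTop.limsup ((fun n : ℕ ↦ 1 + (n : ℝ≥0∞)⁻¹) * fun n ↦ v (n + 1) / (n + 1 : ℕ)) :=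
        limsup_le_limsup (.of_forall fun n ↦
          (ENNReal.div_le_div_right (h n) n).trans_eq (div_natCast_eq_one_add_inv_mul_div_succ _ n))
    _ ≤ atTop.limsup (fun n : ℕ ↦ 1 + (n : ℝ≥0∞)⁻¹) *
          atTop.limsup (fun n : ℕ ↦ v (n + 1) / (n + 1 : ℕ)) :=
        ENNReal.limsup_mul_le' (by simp [hlim]) (by simp [hlim])
    _ = atTop.limsup (fun n : ℕ ↦ v n / n) := by
        rw [hlim, one_mul, limsup_nat_add (fun n : ℕ ↦ v n / n) 1]

end ENNReal

lemma recOfSet_le_of_image_subset {X : Type*} (T : X → X) {U V : Set X} (h : T '' U ⊆ V) :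
    recOfSet T V ≤ recOfSet T U := by
  refine sInf_le_sInf ?_
  rintro t ⟨k, hk, ⟨_, ⟨y, hyU, rfl⟩, hzU⟩, rfl⟩
  refine ⟨k, hk, ⟨T (T^[k] y), ⟨T y, h (mem_image_of_mem T hyU), ?_⟩, h (mem_image_of_mem T hzU)⟩, rfl⟩
  exact ((Function.Commute.self_iterate T k).eq y).symm

lemma image_refAtom_succ_subset {X ι : Type*} (T : X → X) (P : X → ι) (n : ℕ) (x : X) :
    T '' refAtom T P (n + 1) x ⊆ refAtom T P n (T x) := by
  rintro _ ⟨y, hy, rfl⟩ k hk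
  simpa only [Function.iterate_succ_apply] using hy (k + 1) (by omega)

theorem stmt1_general {X ι : Type*}
    (T : X → X)
    (P : X → ι) :
    (∀ n : ℕ, 1 ≤ n → ∀ x : X,
        recOfSet T (refAtom T P (n - 1) (T x)) ≤ recOfSet T (refAtom T P n x)) ∧
      (∀ x : X, lowerRate T P (T x) ≤ lowerRate T P x) ∧
      (∀ x : X, upperRate T P (T x) ≤ upperRate T P x) := by
  have hrec (n : ℕ) (x : X) :
      recOfSet T (refAtom T P n (T x)) ≤ recOfSet T (refAtom T P (n + 1) x) :=
    recOfSet_le_of_image_subset T (image_refAtom_succ_subset T P n x)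
  refine ⟨fun n hn x ↦ ?_, fun x ↦ ?_, fun x ↦ ?_⟩
  · obtain ⟨m, rfl⟩ := Nat.exists_eq_add_of_le' hn
    exact hrec m x
  · exact ENNReal.liminf_div_natCast_le_of_le_succ (hrec · x)
  · exact ENNReal.limsup_div_natCast_le_of_le_succ (hrec · x)

/-- For every `n ≥ 1` and every `x`, `τ(ζ_{n-1}(Tx)) ≤ τ(ζ_n(x))`;
consequently the lower and upper local rates of Poincaré recurrence are
sub-invariant. -/
theorem stmt1 {X ι : Type*} [MeasurableSpace X] [Fintype ι]
    (μ : Measure X) [IsProbabilityMeasure μ]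
    (T : X → X) (hT : MeasurePreserving T μ μ)
    (P : X → ι) (hP : ∀ i, MeasurableSet (P ⁻¹' {i})) :
    (∀ n : ℕ, 1 ≤ n → ∀ x : X,
        recOfSet T (refAtom T P (n - 1) (T x)) ≤ recOfSet T (refAtom T P n x)) ∧
      (∀ x : X, lowerRate T P (T x) ≤ lowerRate T P x) ∧
      (∀ x : X, upperRate T P (T x) ≤ upperRate T P x) :=
  stmt1_general T P
end

section
/- Let (X, S) be an aperiodic linearly recurrent subshift with constant K over a finite alphabet A. Then X is (K+1)-power free: if u is a word with u^{K+1} ∈ L(X) (where u^β denotes the prefix of length ⌊|u|β⌋ of uuu⋯), then u is the empty word. -/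
open Filter Set
open scoped ENNReal

variable {A : Type*}

/-- The two-sided shift on `A^ℤ`. -/
def shiftZ (x : ℤ → A) : ℤ → A := fun n => x (n + 1)

/-- The finite word `u` occurs in the sequence `x` at position `i`. -/
def OccursAt (u : List A) (x : ℤ → A) (i : ℤ) : Prop :=
  ∀ j : Fin u.length, x (i + (j : ℕ)) = u.get j

/-- The finite word `u` occurs (somewhere) in the sequence `x`. -/
def OccursIn (u : List A) (x : ℤ → A) : Prop := ∃ i : ℤ, OccursAt u x i

/-- The language `L(X)` of a subshift `X` : all finite words occurring in some
element of `X`. -/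
def lang (X : Set (ℤ → A)) : Set (List A) := {u | ∃ x ∈ X, OccursIn u x}

/-- The language `L(x)` of a sequence `x` : all finite words occurring in `x`. -/
def langSeq (x : ℤ → A) : Set (List A) := {u | OccursIn u x}

/-- The number of occurrences of `u` as a factor of the finite word `v`. -/
noncomputable def occCount (u v : List A) : ℕ :=
  {i : ℕ | u <+: v.drop i ∧ i + u.length ≤ v.length}.ncard

/-- `w` is a return word to `u` (for the language `L`) : `wu ∈ L`, `u` is a prefix of
`wu` and `u` has exactly two occurrences in `wu`. -/
def IsReturnWord (L : Set (List A)) (u w : List A) : Prop :=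
  (w ++ u) ∈ L ∧ u <+: (w ++ u) ∧ occCount u (w ++ u) = 2

/-- `x` is uniformly recurrent: every word of `L(x)` occurs in `x` with bounded
gaps. -/
def UniformlyRecurrent (x : ℤ → A) : Prop :=
  ∀ u ∈ langSeq x, ∃ N : ℕ, ∀ i : ℤ, ∃ j : ℤ, i ≤ j ∧ j < i + N ∧ OccursAt u x j

/-- `x` is linearly recurrent with constant `K` : it is uniformly recurrent and every
return word `w` to a word `u ∈ L(x)` satisfies `|w| ≤ K⬝|u|`. -/
def LinearlyRecurrentSeq (K : ℝ) (x : ℤ → A) : Prop :=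
  UniformlyRecurrent x ∧
    ∀ u ∈ langSeq x, ∀ w : List A,
      IsReturnWord (langSeq x) u w → (w.length : ℝ) ≤ K * u.length

/-- A subshift: a closed shift-invariant subset of `A^ℤ`. -/
def IsSubshift [TopologicalSpace A] (X : Set (ℤ → A)) : Prop :=
  IsClosed X ∧ shiftZ '' X = X

/-- A minimal subshift: a nonempty subshift with no nonempty proper closed
shift-invariant subset. -/
def IsMinimalSubshift [TopologicalSpace A] (X : Set (ℤ → A)) : Prop :=
  IsSubshift X ∧ X.Nonempty ∧
    ∀ Y ⊆ X, IsClosed Y → shiftZ '' Y = Y → Y = ∅ ∨ Y = X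

/-- A linearly recurrent (LR) subshift with constant `K` : a minimal subshift
containing a linearly recurrent sequence with constant `K`. -/
def IsLRSubshift [TopologicalSpace A] (K : ℝ) (X : Set (ℤ → A)) : Prop :=
  IsMinimalSubshift X ∧ ∃ x ∈ X, LinearlyRecurrentSeq K x

/-- The subshift `X` is aperiodic: it contains no periodic point. -/
def AperiodicSubshift (X : Set (ℤ → A)) : Prop :=
  ∀ x ∈ X, ∀ n : ℕ, 0 < n → shiftZ^[n] x ≠ x

/-- The fractional power `u^β` : the prefix of length `⌊|u|⬝β⌋` of `uuu⋯`. -/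
noncomputable def fracPow (u : List A) (β : ℝ) : List A :=
  (List.flatten (List.replicate (⌈β⌉₊ + 1) u)).take ⌊(u.length : ℝ) * β⌋₊


/-!
Let `x ∈ X` be linearly recurrent with constant `K` and let `n = |u| > 0`. By minimality every
word of `L(X)` occurs in `x`, in particular `u^{K+1}`, say at position `t`. The word between two
consecutive occurrences of `s` in `x` is a return word, so these occurrences are at most `K|s|`
apart; hence every word `s` of length `n` occurs at some `t + d` with `d + 1 ≤ K n`. It then lies
inside the occurrence of `u^{K+1}`, so it is a rotation of `u`. Thus all windows of length `n` in
`x` have the same letters, and comparing the windows at `t` and `t + 1` gives `x t = x (t + n)`: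
`x` is a periodic point of `X`.
-/

def wordAt (x : ℤ → A) (i : ℤ) (m : ℕ) : List A := List.ofFn fun j : Fin m => x (i + j)

@[simp] lemma length_wordAt (x : ℤ → A) (i : ℤ) (m : ℕ) : (wordAt x i m).length = m :=
  List.length_ofFn

@[simp] lemma getElem_wordAt (x : ℤ → A) (i : ℤ) (m : ℕ) {j : ℕ}
    (hj : j < (wordAt x i m).length) : (wordAt x i m)[j] = x (i + j) :=
  List.getElem_ofFn ..

lemma occursAt_iff_wordAt_eq {u : List A} {x : ℤ → A} {i : ℤ} :
    OccursAt u x i ↔ wordAt x i u.length = u := by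
  conv_rhs => rhs; rw [← List.ofFn_get u]
  rw [wordAt, List.ofFn_inj, funext_iff]
  rfl

lemma wordAt_mem_langSeq (x : ℤ → A) (i : ℤ) (m : ℕ) : wordAt x i m ∈ langSeq x :=
  ⟨i, occursAt_iff_wordAt_eq.mpr (by rw [length_wordAt])⟩

lemma wordAt_add (x : ℤ → A) (i : ℤ) (a b : ℕ) :
    wordAt x i (a + b) = wordAt x i a ++ wordAt x (i + a) b := by
  refine List.ext_getElem (by simp) fun j _ _ => ?_
  rw [List.getElem_append]
  split_ifs with h
  · simp only [getElem_wordAt]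
  · simp only [getElem_wordAt, length_wordAt] at h ⊢
    congr 1
    push_cast [Nat.le_of_not_lt h]
    ring

lemma take_wordAt (x : ℤ → A) (i : ℤ) (m k : ℕ) :
    (wordAt x i m).take k = wordAt x i (min k m) :=
  List.ext_getElem (by simp) fun j _ _ => by simp

lemma drop_wordAt (x : ℤ → A) (i : ℤ) (m k : ℕ) :
    (wordAt x i m).drop k = wordAt x (i + k) (m - k) := by
  refine List.ext_getElem (by simp) fun j _ _ => ?_
  simp only [List.getElem_drop, getElem_wordAt]
  congr 1
  push_cast
  ring

lemma isPrefix_wordAt_iff {s : List A} {x : ℤ → A} {i : ℤ} {m : ℕ} :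
    s <+: wordAt x i m ↔ s.length ≤ m ∧ OccursAt s x i := by
  rw [List.prefix_iff_eq_take, occursAt_iff_wordAt_eq, take_wordAt]
  constructor
  · intro h
    have hs : s.length ≤ m := by
      have := congrArg List.length h
      simp only [length_wordAt] at this
      omega
    rw [min_eq_left hs] at h
    exact ⟨hs, h.symm⟩
  · rintro ⟨hs, h⟩
    rw [min_eq_left hs, h]

lemma isReturnWord_wordAt {x : ℤ → A} {s : List A} {q : ℤ} {d : ℕ} (hd : 0 < d)
    (hq : OccursAt s x q) (hqd : OccursAt s x (q + d))
    (hgap : ∀ i : ℕ, 0 < i → i < d → ¬ OccursAt s x (q + i)) :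
    IsReturnWord (langSeq x) s (wordAt x q d) := by
  have hws : wordAt x q d ++ s = wordAt x q (d + s.length) := by
    rw [wordAt_add, occursAt_iff_wordAt_eq.mp hqd]
  have hocc : ∀ i ≤ d, s <+: (wordAt x q d ++ s).drop i ↔ OccursAt s x (q + i) := by
    intro i hi
    rw [hws, drop_wordAt, isPrefix_wordAt_iff]
    exact and_iff_right (by omega)
  have hocc0 : s <+: wordAt x q d ++ s := by
    simpa using (hocc 0 d.zero_le).2 (by simpa using hq)
  refine ⟨hws ▸ wordAt_mem_langSeq .., hocc0, ?_⟩
  rw [occCount, ← Set.ncard_pair hd.ne]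
  congr 1
  ext i
  simp only [Set.mem_ofPred_eq, Set.mem_insert_iff, Set.mem_singleton_iff, List.length_append,
    length_wordAt]
  constructor
  · rintro ⟨hpre, hi⟩
    by_contra hne
    exact hgap i (by omega) (by omega) ((hocc i (by omega)).1 hpre)
  · rintro (h | h) <;> rw [h]
    · exact ⟨by simpa using hocc0, by omega⟩
    · exact ⟨(hocc d le_rfl).2 hqd, le_rfl⟩

open List in
lemma flatten_replicate_eq_ofFn (u : List A) (c : ℕ) :
    (replicate c u).flatten = ofFn (Fin.repeat c u.get) := by
  rw [ofFn_fin_repeat, ofFn_get]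

lemma length_fracPow (u : List A) (β : ℝ) :
    (fracPow u β).length = ⌊(u.length : ℝ) * β⌋₊ := by
  rw [fracPow, List.length_take, flatten_replicate_eq_ofFn, List.length_ofFn, min_eq_left_iff]
  have hu : (0 : ℝ) ≤ u.length := u.length.cast_nonneg
  rcases le_or_gt β 0 with hβ | hβ
  · rw [Nat.floor_eq_zero.mpr (by nlinarith)]
    exact Nat.zero_le _
  · refine Nat.floor_le_of_le ?_
    push_cast
    nlinarith [Nat.le_ceil β]

lemma getElem_fracPow (u : List A) (β : ℝ) {j : ℕ} (hj : j < (fracPow u β).length)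
    (hu : 0 < u.length) : (fracPow u β)[j] = u[j % u.length]'(Nat.mod_lt _ hu) := by
  simp only [fracPow, List.getElem_take, flatten_replicate_eq_ofFn, List.getElem_ofFn,
    Fin.repeat_apply, Fin.modNat, List.get_eq_getElem]

namespace LinearlyRecurrentSeq

variable {K : ℝ} {x : ℤ → A}

lemma gap_le (hx : LinearlyRecurrentSeq K x) {s : List A} {q : ℤ} {d : ℕ} (hd : 0 < d)
    (hq : OccursAt s x q) (hqd : OccursAt s x (q + d))
    (hgap : ∀ i : ℕ, 0 < i → i < d → ¬ OccursAt s x (q + i)) :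
    (d : ℝ) ≤ K * s.length := by
  simpa using hx.2 s ⟨q, hq⟩ _ (isReturnWord_wordAt hd hq hqd hgap)

lemma exists_occursAt_add (hx : LinearlyRecurrentSeq K x) {s : List A} (hs : s ∈ langSeq x)
    (t : ℤ) : ∃ d : ℕ, OccursAt s x (t + d) ∧ (d : ℝ) + 1 ≤ K * s.length := by
  classical
  obtain ⟨N, hN⟩ := hx.1 s hs
  obtain ⟨q, ⟨hqt, hq⟩, hqmax⟩ := Int.exists_greatest_of_bdd
    (P := fun z => z < t ∧ OccursAt s x z) ⟨t, fun z hz => hz.1.le⟩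
    (by obtain ⟨j, -, hj, hocc⟩ := hN (t - N); exact ⟨j, by omega, hocc⟩)
  have hex : ∃ d : ℕ, OccursAt s x (t + d) := by
    obtain ⟨j, hj, -, hocc⟩ := hN t
    exact ⟨(j - t).toNat, by rwa [Int.toNat_of_nonneg (by omega), add_sub_cancel]⟩
  refine ⟨Nat.find hex, Nat.find_spec hex, ?_⟩
  -- the occurrences at `q < t` and at `t + Nat.find hex` are consecutive
  obtain ⟨e, rfl⟩ : ∃ e : ℕ, t = q + (e + 1) := ⟨(t - q - 1).toNat, by omega⟩
  have hgap := hx.gap_le (d := e + 1 + Nat.find hex) (by omega) hq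
    (by simpa [add_assoc] using Nat.find_spec hex) fun i hi hid hocc => by
      by_cases hie : i ≤ e
      · have := hqmax _ ⟨by omega, hocc⟩
        omega
      · refine Nat.find_min hex (m := i - (e + 1)) (by omega) ?_
        rwa [show q + (e + 1) + (i - (e + 1) : ℕ) = q + i by omega]
  push_cast at hgap
  linarith

lemma perm_of_fracPow_mem (hx : LinearlyRecurrentSeq K x) {u : List A} (hu : 0 < u.length)
    (hux : fracPow u (K + 1) ∈ langSeq x) {s : List A} (hs : s ∈ langSeq x)
    (hlen : s.length = u.length) : s.Perm u := by
  obtain ⟨t, ht⟩ := hux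
  obtain ⟨d, hd, hdK⟩ := hx.exists_occursAt_add hs t
  have hfit : d + u.length ≤ (fracPow u (K + 1)).length := by
    rw [length_fracPow]
    apply Nat.le_floor
    push_cast
    rw [hlen] at hdK
    linarith
  refine (List.Perm.of_eq ?_).trans (u.rotate_perm (d % u.length))
  refine List.ext_getElem (by simp [hlen]) fun i hi _ => ?_
  have hsx : s[i] = x (t + (d + i : ℕ)) := by
    have := hd ⟨i, hi⟩
    rw [List.get_eq_getElem] at this
    rw [← this]
    push_cast
    ring_nf
  rw [List.getElem_rotate, hsx, ht ⟨d + i, by omega⟩, List.get_eq_getElem,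
    getElem_fracPow _ _ _ hu]
  congr 1
  dsimp only
  rw [Nat.add_comm i, Nat.mod_add_mod, Nat.add_comm]

end LinearlyRecurrentSeq

lemma shiftZ_iterate_apply (k : ℕ) (x : ℤ → A) (t : ℤ) : shiftZ^[k] x t = x (t + k) := by
  induction k generalizing x with
  | zero => simp
  | succ k ih =>
    rw [Function.iterate_succ_apply, ih, shiftZ]
    push_cast
    ring_nf

lemma iterate_shiftZ_eq_self_of_forall_perm {x : ℤ → A} {u : List A} (hu : 0 < u.length)
    (hperm : ∀ s ∈ langSeq x, s.length = u.length → s.Perm u) :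
    shiftZ^[u.length] x = x := by
  obtain ⟨m, hm⟩ : ∃ m, u.length = m + 1 := ⟨u.length - 1, by omega⟩
  funext t
  have hwin := (hperm _ (wordAt_mem_langSeq x t (1 + m)) (by simp [hm, add_comm])).trans
    (hperm _ (wordAt_mem_langSeq x (t + 1) (m + 1)) (by simp [hm])).symm
  rw [wordAt_add, wordAt_add, Nat.cast_one] at hwin
  have hends := List.perm_append_right_iff _ |>.mp (hwin.trans List.perm_append_comm)
  simp only [wordAt, List.ofFn_succ, List.ofFn_zero, List.singleton_perm_singleton,
    Fin.val_zero, Nat.cast_zero, add_zero] at hends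
  rw [shiftZ_iterate_apply, hm]
  convert hends.symm using 2
  push_cast
  ring

lemma occursAt_shiftZ_iff {v : List A} {y : ℤ → A} {i : ℤ} :
    OccursAt v (shiftZ y) i ↔ OccursAt v y (i + 1) := by
  simp only [OccursAt, shiftZ, add_right_comm]

lemma langSeq_shiftZ (y : ℤ → A) : langSeq (shiftZ y) = langSeq y := by
  ext v
  constructor
  · rintro ⟨i, h⟩
    exact ⟨i + 1, occursAt_shiftZ_iff.mp h⟩
  · rintro ⟨i, h⟩
    exact ⟨i - 1, occursAt_shiftZ_iff.mpr (by rwa [sub_add_cancel])⟩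

section Topology

variable [TopologicalSpace A] [DiscreteTopology A]

lemma isOpen_setOf_occursAt (v : List A) (i : ℤ) : IsOpen {y : ℤ → A | OccursAt v y i} := by
  simp only [OccursAt, Set.ofPred_forall]
  exact isOpen_iInter_of_finite fun j =>
    (isOpen_discrete {v.get j}).preimage (continuous_apply (A := fun _ : ℤ => A) (i + j))

lemma isClosed_setOf_langSeq_subset (L : Set (List A)) :
    IsClosed {y : ℤ → A | langSeq y ⊆ L} := by
  have hY : {y : ℤ → A | langSeq y ⊆ L} =
      ⋂ v, ⋂ i, ({y | OccursAt v y i}ᶜ ∪ {_y | v ∈ L}) := by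
    ext y
    simp only [Set.mem_ofPred_eq, Set.mem_iInter, Set.mem_union, Set.mem_compl_iff,
      Set.subset_def, langSeq, OccursIn, exists_imp]
    simp only [imp_iff_not_or]
  rw [hY]
  exact isClosed_iInter fun v => isClosed_iInter fun i =>
    (isOpen_setOf_occursAt v i).isClosed_compl.union isClosed_const

lemma IsMinimalSubshift.lang_subset_langSeq {X : Set (ℤ → A)} (hX : IsMinimalSubshift X)
    {x : ℤ → A} (hx : x ∈ X) : lang X ⊆ langSeq x := by
  obtain ⟨⟨hclosed, hshift⟩, -, hmin⟩ := hX
  have hY : shiftZ '' (X ∩ {y | langSeq y ⊆ langSeq x}) = X ∩ {y | langSeq y ⊆ langSeq x} := by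
    ext y
    constructor
    · rintro ⟨z, ⟨hzX, hz⟩, rfl⟩
      exact ⟨hshift ▸ Set.mem_image_of_mem _ hzX, (langSeq_shiftZ z).trans_subset hz⟩
    · rintro ⟨hyX, hy⟩
      obtain ⟨z, hzX, rfl⟩ : y ∈ shiftZ '' X := hshift.symm ▸ hyX
      exact ⟨z, ⟨hzX, (langSeq_shiftZ z).symm.trans_subset hy⟩, rfl⟩
  rcases hmin _ Set.inter_subset_left (hclosed.inter (isClosed_setOf_langSeq_subset _)) hY
    with h | h
  · exact absurd (h.subset ⟨hx, (subset_rfl : langSeq x ⊆ _)⟩) (Set.notMem_empty x)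
  · rintro v ⟨y, hy, hv⟩
    exact (h.symm.subset hy).2 hv

end Topology

theorem stmt9_general {A : Type*} [TopologicalSpace A] [DiscreteTopology A]
    (X : Set (ℤ → A)) (K : ℝ)
    (hLR : IsLRSubshift K X) (hap : AperiodicSubshift X) :
    ∀ u : List A, fracPow u (K + 1) ∈ lang X → u = [] := by
  intro u hu
  obtain ⟨hmin, x, hxX, hx⟩ := hLR
  by_contra hne
  have hpos : 0 < u.length := List.length_pos_iff.mpr hne
  have hux : fracPow u (K + 1) ∈ langSeq x := hmin.lang_subset_langSeq hxX hu
  exact hap x hxX u.length hpos <| iterate_shiftZ_eq_self_of_forall_perm hpos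
    fun s hs hlen => hx.perm_of_fracPow_mem hpos hux hs hlen

/-- An aperiodic linearly recurrent subshift with constant `K` is
`(K+1)`-power free: the only word `u` with `u^{K+1} ∈ L(X)` is the empty word. -/
theorem stmt9 {A : Type*} [Fintype A] [TopologicalSpace A] [DiscreteTopology A]
    (X : Set (ℤ → A)) (K : ℝ)
    (hLR : IsLRSubshift K X) (hap : AperiodicSubshift X) :
    ∀ u : List A, fracPow u (K + 1) ∈ lang X → u = [] :=
  stmt9_general X K hLR hap
end

section
/- Let (X, S) be an aperiodic linearly recurrent subshift with constant K over a finite alphabet A. Then for every word u ∈ L(X) and every return word w to u, one has |w| > |u|/K. -/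
open Filter Set
open scoped ENNReal

variable {A : Type*}

/-! ### Auxiliary material for the proof of `stmt10`. -/

namespace Stmt10Aux

/-- The finite window `x[a, a+n)` of a sequence, as a list. -/
def window (x : ℤ → A) (a : ℤ) (n : ℕ) : List A := List.ofFn (fun j : Fin n => x (a + j))

@[simp] lemma window_length (x : ℤ → A) (a : ℤ) (n : ℕ) : (window x a n).length = n := by
  simp [window]

lemma window_getElem (x : ℤ → A) (a : ℤ) (n : ℕ) (j : ℕ) (hj : j < n) :
    (window x a n)[j]'(by simpa using hj) = x (a + j) := by
  simp [window]

lemma occursAt_iff {u : List A} {x : ℤ → A} {i : ℤ} :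
    OccursAt u x i ↔ ∀ j : ℕ, ∀ _ : j < u.length, x (i + j) = u[j] := by
  constructor
  · intro h j hj
    simpa [List.get_eq_getElem] using h ⟨j, hj⟩
  · intro h j
    simpa [List.get_eq_getElem] using h j j.isLt

lemma occursAt_window (x : ℤ → A) (a : ℤ) (n : ℕ) : OccursAt (window x a n) x a := by
  rw [occursAt_iff]
  intro j hj
  rw [window_getElem x a n j (by simpa using hj)]

lemma window_append (x : ℤ → A) (a : ℤ) (m n : ℕ) :
    window x a (m + n) = window x a m ++ window x (a + m) n := by
  apply List.ext_getElem (by simp)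
  intro j h1 h2
  by_cases hj : j < m
  · rw [List.getElem_append_left (by simpa using hj)]
    simp [window]
  · rw [List.getElem_append_right (by simpa using hj)]
    simp only [window, List.getElem_ofFn, List.length_ofFn]
    congr 1
    omega

lemma window_drop (x : ℤ → A) (a : ℤ) (n : ℕ) (i : ℕ) (hi : i ≤ n) :
    (window x a n).drop i = window x (a + i) (n - i) := by
  apply List.ext_getElem (by simp)
  intro j h1 h2
  rw [List.getElem_drop]
  simp only [window, List.getElem_ofFn]
  congr 1
  omega

lemma window_prefix (x : ℤ → A) (a : ℤ) (m n : ℕ) (h : m ≤ n) :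
    window x a m <+: window x a n := by
  have hn : n = m + (n - m) := by omega
  rw [hn, window_append]
  exact List.prefix_append _ _

lemma shiftZ_iterate (k : ℕ) (z : ℤ → A) (n : ℤ) : (shiftZ^[k] z) n = z (n + k) := by
  induction k generalizing n with
  | zero => simp
  | succ k ih =>
    rw [Function.iterate_succ_apply']
    show (shiftZ^[k] z) (n + 1) = z (n + (k + 1))
    rw [ih]
    congr 1
    push_cast
    ring

/-- The cyclic forcing lemma: if `f : ZMod p → B` satisfies `f (s+g) = f s` for all
`s` except possibly `r₀`, then the relation holds at `r₀` as well. -/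
lemma cyclic_force {p : ℕ} [NeZero p] {B : Type*} (f : ZMod p → B) (g r₀ : ZMod p)
    (h : ∀ s : ZMod p, s ≠ r₀ → f (s + g) = f s) : f (r₀ + g) = f r₀ := by
  by_cases hg : g = 0
  · simp [hg]
  have hex : ∃ j, 0 < j ∧ j • g = 0 := ⟨p, NeZero.pos p, by
    simp [nsmul_eq_mul, ZMod.natCast_self]⟩
  classical
  set k := Nat.find hex with hk
  have hks := Nat.find_spec hex
  have hmin : ∀ j, 0 < j → j < k → j • g ≠ 0 := fun j h1 h2 h3 =>
    Nat.find_min hex h2 ⟨h1, h3⟩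
  have chain : ∀ j, 1 ≤ j → j ≤ k → f (r₀ + j • g) = f (r₀ + g) := by
    intro j
    induction j with
    | zero => omega
    | succ j ih =>
      intro h1 h2
      rcases Nat.lt_or_ge 0 j with hj0 | hj0
      · have hjk : j < k := by omega
        have hne : r₀ + j • g ≠ r₀ := by
          intro hEq
          exact hmin j hj0 hjk (by rwa [add_eq_left] at hEq)
        have hrel := h (r₀ + j • g) hne
        have hstep : f (r₀ + (j + 1) • g) = f (r₀ + j • g) := by
          rw [succ_nsmul, ← add_assoc]
          exact hrel
        rw [hstep, ih hj0 (by omega)]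
      · have hj : j = 0 := by omega
        subst hj
        simp
  have h0 : 0 < k := hks.1
  have hfin := chain k h0 le_rfl
  rw [hks.2] at hfin
  simpa using hfin.symm

/-- Key combinatorial lemma: the left extension by one letter of a (left-maximal)
`p`-periodic zone cannot reoccur inside the zone. -/
lemma no_occ_in_zone {p : ℕ} (hp : 0 < p) (x : ℤ → A) (a E i : ℤ)
    (hzone : ∀ m, a ≤ m → m + p < E → x m = x (m + p))
    (hbreak : x (a - 1) ≠ x (a - 1 + p))
    (hbE : a - 1 + p < E)
    (hai : a ≤ i) (hiE : i + p ≤ E)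
    (hocc : ∀ j : ℕ, j < p → x (i + j) = x (a - 1 + j)) : False := by
  haveI : NeZero p := ⟨hp.ne'⟩
  set f : ZMod p → A := fun s => x (a + s.val) with hf
  have key : ∀ k : ℕ, a + k < E → x (a + k) = f (k : ZMod p) := by
    intro k
    induction k using Nat.strong_induction_on with
    | _ k ih =>
      intro hkE
      by_cases hkp : k < p
      · have hv : ((k : ZMod p)).val = k := by
          rw [ZMod.val_natCast, Nat.mod_eq_of_lt hkp]
        simp only [hf, hv]
      · push_neg at hkp
        have hc1 : ((k - p : ℕ) : ℤ) = (k : ℤ) - p := by omega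
        have h1 : x (a + ((k - p : ℕ) : ℤ)) = x (a + ((k - p : ℕ) : ℤ) + p) := by
          apply hzone
          · omega
          · omega
        have h2 := ih (k - p) (by omega) (by omega)
        have h3 : ((k : ℕ) : ZMod p) = ((k - p : ℕ) : ZMod p) := by
          have hkk : k - p + p = k := by omega
          calc ((k : ℕ) : ZMod p) = ((k - p + p : ℕ) : ZMod p) := by rw [hkk]
            _ = ((k - p : ℕ) : ZMod p) := by push_cast [ZMod.natCast_self]; ring
        have h4 : a + ((k - p : ℕ) : ℤ) + p = a + k := by omega
        rw [h3, ← h2, ← h4, ← h1]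
  set D : ℕ := (i - a).toNat with hDdef
  have hD : (D : ℤ) = i - a := Int.toNat_of_nonneg (by omega)
  set g : ZMod p := ((D + 1 : ℕ) : ZMod p) with hgdef
  set r₀ : ZMod p := ((p - 1 : ℕ) : ZMod p) with hr₀def
  have hr₀val : r₀.val = p - 1 := by
    rw [hr₀def, ZMod.val_natCast, Nat.mod_eq_of_lt (by omega)]
  have hrel : ∀ s : ZMod p, s ≠ r₀ → f (s + g) = f s := by
    intro s hs
    have hsval : s.val < p := ZMod.val_lt s
    have hs' : ((s.val : ℕ) : ZMod p) = s := ZMod.natCast_rightInverse s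
    have hsne : s.val ≠ p - 1 := by
      intro hEq
      apply hs
      rw [← hs', hEq, hr₀def]
    have hjp : s.val + 1 < p := by omega
    have hcast : s + g = ((D + (s.val + 1) : ℕ) : ZMod p) := by
      conv_lhs => rw [← hs']
      rw [hgdef, ← Nat.cast_add]
      congr 1
      omega
    have e1 : a + ((D + (s.val + 1) : ℕ) : ℤ) = i + ((s.val + 1 : ℕ) : ℤ) := by
      push_cast
      omega
    have hlt : a + ((D + (s.val + 1) : ℕ) : ℤ) < E := by
      have hcc : ((D + (s.val + 1) : ℕ) : ℤ) = (D : ℤ) + (s.val : ℤ) + 1 := by push_cast; ring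
      have hsv : (s.val : ℤ) < (p : ℤ) := by exact_mod_cast hsval
      have hsv2 : (s.val : ℤ) ≠ (p : ℤ) - 1 := by omega
      omega
    calc f (s + g) = f ((D + (s.val + 1) : ℕ) : ZMod p) := by rw [hcast]
      _ = x (a + ((D + (s.val + 1) : ℕ) : ℤ)) := (key _ hlt).symm
      _ = x (i + ((s.val + 1 : ℕ) : ℤ)) := by rw [e1]
      _ = x (a - 1 + ((s.val + 1 : ℕ) : ℤ)) := hocc (s.val + 1) hjp
      _ = x (a + ((s.val : ℕ) : ℤ)) := by congr 1; push_cast; ring_nf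
      _ = f s := by rw [hf]
  have hcyc := cyclic_force f g r₀ hrel
  have hfr₀ : f r₀ = x (a - 1 + p) := by
    rw [hf]
    simp only
    rw [hr₀val]
    congr 1
    omega
  have hrg : r₀ + g = (D : ZMod p) := by
    rw [hr₀def, hgdef, ← Nat.cast_add]
    have hinner : (p - 1) + (D + 1) = D + p := by omega
    rw [hinner]
    push_cast [ZMod.natCast_self]
    ring
  have hfrg : f (r₀ + g) = x (a - 1) := by
    rw [hrg]
    have e3 : a + (D : ℤ) = i := by omega
    have hkD := key D (by omega)
    rw [e3] at hkD
    rw [← hkD]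
    have h00 := hocc 0 hp
    simpa using h00
  exact hbreak (by rw [← hfrg, hcyc, hfr₀])

/-- Backward shifts of elements of a shift-invariant set stay in the set. -/
lemma past_shift_mem {X : Set (ℤ → A)} (hXs : shiftZ '' X = X) {x : ℤ → A} (hx : x ∈ X) :
    ∀ k : ℕ, (fun n => x (n - k)) ∈ X := by
  intro k
  induction k with
  | zero => simpa using hx
  | succ k ih =>
    have himg : (fun n => x (n - k)) ∈ shiftZ '' X := by rw [hXs]; exact ih
    obtain ⟨z, hz, hzz⟩ := himg
    have hzeq : z = fun n => x (n - (k + 1 : ℕ)) := by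
      funext n
      have hcf := congrFun hzz (n - 1)
      have : z n = x (n - 1 - k) := by
        simpa [shiftZ, sub_add_cancel] using hcf
      rw [this]
      congr 1
      push_cast
      ring
    rw [← hzeq]
    exact hz

/-- If `x ∈ X` is `p`-periodic on a left half-line, then the closed shift-invariant
set `X` contains a `p`-periodic point. -/
lemma exists_periodic_point [TopologicalSpace A] {X : Set (ℤ → A)} (hXc : IsClosed X)
    (hXs : shiftZ '' X = X) {x : ℤ → A} (hx : x ∈ X) {p : ℕ} (hp : 0 < p) (B : ℤ)
    (hper : ∀ m : ℤ, m < B → x m = x (m + p)) :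
    ∃ y ∈ X, shiftZ^[p] y = y := by
  have hp1 : (1 : ℤ) ≤ p := by exact_mod_cast hp
  set c : ℤ := B - p with hc
  set y : ℤ → A := fun n => x (c + (n - c) % p) with hy
  have hclimb : ∀ (j : ℕ) (m : ℤ), m + j * p < B → x m = x (m + j * p) := by
    intro j
    induction j with
    | zero => intro m _; simp
    | succ j ih =>
      intro m hm
      have hmono : (j : ℤ) * p < (j + 1 : ℕ) * p := by push_cast; nlinarith
      have h1 : m + j * p < B := by omega
      have h2 := ih m h1
      have h3 := hper (m + j * p) h1
      rw [h2, h3]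
      congr 1
      push_cast
      ring
  have hyval : ∀ n : ℤ, c ≤ c + (n - c) % p ∧ c + (n - c) % p < B := by
    intro n
    have h1 := Int.emod_nonneg (n - c) (by positivity : (p : ℤ) ≠ 0)
    have h2 := Int.emod_lt_of_pos (n - c) (by exact_mod_cast hp : (0:ℤ) < p)
    omega
  have hmodn : ∀ n : ℤ, (c + (n - c) % p) % p = n % p := by
    intro n
    conv_rhs => rw [show n = c + (n - c) by ring]
    rw [Int.add_emod, Int.add_emod c (n - c), Int.emod_emod_of_dvd _ dvd_rfl]
  -- the approximating sequence
  set F : ℕ → (ℤ → A) := fun m => fun n => x (n - (m * p : ℕ)) with hF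
  have hFX : ∀ m, F m ∈ X := fun m => past_shift_mem hXs hx (m * p)
  have hFy : ∀ n : ℤ, ∀ m : ℕ, (n - c).toNat ≤ m → F m n = y n := by
    intro n m hm
    set n₀ : ℤ := c + (n - c) % p with hn₀
    have hn₀B : n₀ < B := (hyval n).2
    have hd : F m n = x (n - (m : ℤ) * p) := by
      show x (n - ((m * p : ℕ) : ℤ)) = _
      have hmp' : ((m * p : ℕ) : ℤ) = (m : ℤ) * p := by push_cast; ring
      rw [hmp']
    set d : ℤ := n - (m : ℤ) * p with hdd
    have hdn₀ : d ≤ n₀ := by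
      have hmp : (m : ℤ) ≤ (m : ℤ) * p := by nlinarith [Int.ofNat_nonneg m]
      have h3 : 0 ≤ (n - c) % p := Int.emod_nonneg _ (by positivity)
      rcases le_or_gt (n - c) 0 with hcase | hcase
      · have : 0 ≤ (m : ℤ) * p := by positivity
        omega
      · have htn : ((n - c).toNat : ℤ) = n - c := Int.toNat_of_nonneg (le_of_lt hcase)
        have : ((n - c).toNat : ℤ) ≤ (m : ℤ) := by exact_mod_cast hm
        omega
    have hmod : d % p = n₀ % p := by
      rw [hn₀, hmodn n, hdd]
      rw [show n - (m : ℤ) * p = n + (p : ℤ) * (-(m : ℤ)) by ring,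
        Int.add_mul_emod_self_left]
    have hdvd : (p : ℤ) ∣ n₀ - d := Int.ModEq.dvd hmod
    set j : ℕ := ((n₀ - d) / p).toNat with hj
    have hjnn : 0 ≤ (n₀ - d) / p := Int.ediv_nonneg (by omega) (by positivity)
    have hjval : (j : ℤ) * p = n₀ - d := by
      rw [hj, Int.toNat_of_nonneg hjnn]
      exact Int.ediv_mul_cancel hdvd
    have hcl := hclimb j d (by omega)
    rw [hd]
    show x d = y n
    rw [hcl, hy]
    congr 1
    omega
  have htend : Tendsto F atTop (nhds y) := by
    rw [tendsto_pi_nhds]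
    intro n
    refine Tendsto.congr' ?_ tendsto_const_nhds
    filter_upwards [eventually_ge_atTop (n - c).toNat] with m hm
    exact (hFy n m hm).symm
  have hyX : y ∈ X := hXc.mem_of_tendsto htend (Filter.Eventually.of_forall hFX)
  refine ⟨y, hyX, ?_⟩
  funext n
  rw [shiftZ_iterate]
  show x (c + (n + p - c) % p) = x (c + (n - c) % p)
  congr 2
  rw [show n + (p : ℤ) - c = (n - c) + (p : ℤ) * 1 by ring, Int.add_mul_emod_self_left]

lemma occursAt_shiftZ {u : List A} {z : ℤ → A} {i : ℤ} :
    OccursAt u (shiftZ z) i ↔ OccursAt u z (i + 1) := by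
  constructor
  · intro h j
    have := h j
    simpa [shiftZ, add_right_comm] using this
  · intro h j
    have := h j
    simpa [shiftZ, add_right_comm] using this

lemma occursIn_shiftZ (u : List A) (z : ℤ → A) : OccursIn u (shiftZ z) ↔ OccursIn u z := by
  constructor
  · rintro ⟨i, hi⟩
    exact ⟨i + 1, occursAt_shiftZ.1 hi⟩
  · rintro ⟨i, hi⟩
    exact ⟨i - 1, occursAt_shiftZ.2 (by simpa using hi)⟩

/-- In a minimal subshift, every word occurring in any element occurs in every
element (stated for a fixed `x ∈ X`). -/
lemma lang_subset [TopologicalSpace A] [DiscreteTopology A] {X : Set (ℤ → A)}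
    (hmin : IsMinimalSubshift X) {x : ℤ → A} (hx : x ∈ X) :
    ∀ y ∈ X, ∀ u : List A, OccursIn u y → OccursIn u x := by
  obtain ⟨⟨hXc, hXs⟩, hne, hm⟩ := hmin
  set Y : Set (ℤ → A) := X ∩ {z | ∀ u : List A, OccursIn u z → OccursIn u x} with hY
  have hYc : IsClosed Y := by
    apply hXc.inter
    have hrw : {z : ℤ → A | ∀ u : List A, OccursIn u z → OccursIn u x} =
        ⋂ (u : List A), {z | OccursIn u z → OccursIn u x} := by
      ext z; simp
    rw [hrw]
    refine isClosed_iInter fun u => ?_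
    by_cases hu : OccursIn u x
    · have : {z : ℤ → A | OccursIn u z → OccursIn u x} = univ := by
        ext z; simp [hu]
      rw [this]; exact isClosed_univ
    · have : {z : ℤ → A | OccursIn u z → OccursIn u x} = {z | OccursIn u z}ᶜ := by
        ext z; simp [hu]
      rw [this, isClosed_compl_iff]
      have : {z : ℤ → A | OccursIn u z} = ⋃ i : ℤ, {z | OccursAt u z i} := by
        ext z; simp [OccursIn]
      rw [this]
      refine isOpen_iUnion fun i => ?_
      have : {z : ℤ → A | OccursAt u z i} = ⋂ j : Fin u.length, {z | z (i + (j : ℕ)) = u.get j} := by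
        ext z; simp [OccursAt]
      rw [this]
      refine isOpen_iInter_of_finite fun j => ?_
      have hpre : {z : ℤ → A | z (i + (j : ℕ)) = u.get j} =
          (fun z : ℤ → A => z (i + (j : ℕ))) ⁻¹' {u.get j} := rfl
      rw [hpre]
      exact (isOpen_discrete _).preimage (continuous_apply _)
  have hYinv : shiftZ '' Y = Y := by
    apply subset_antisymm
    · rintro z ⟨z', ⟨hz'X, hz'cond⟩, rfl⟩
      constructor
      · rw [← hXs]; exact ⟨z', hz'X, rfl⟩
      · intro u hu
        exact hz'cond u ((occursIn_shiftZ u z').1 hu)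
    · rintro z ⟨hzX, hzcond⟩
      have : z ∈ shiftZ '' X := by rw [hXs]; exact hzX
      obtain ⟨z', hz'X, hz'z⟩ := this
      refine ⟨z', ⟨hz'X, ?_⟩, hz'z⟩
      intro u hu
      apply hzcond u
      rw [← hz'z]
      exact (occursIn_shiftZ u z').2 hu
  have hxY : x ∈ Y := ⟨hx, fun u hu => hu⟩
  rcases hm Y inter_subset_left hYc hYinv with hempty | hfull
  · exact absurd (hempty ▸ hxY) (Set.notMem_empty x)
  · intro y hy u hu
    have : y ∈ Y := hfull ▸ hy
    exact this.2 u hu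

end Stmt10Aux

/-- In an aperiodic linearly recurrent subshift with constant `K`,
every return word `w` to a word `u ∈ L(X)` satisfies `|w| > |u|/K`. -/
theorem stmt10 {A : Type*} [Fintype A] [TopologicalSpace A] [DiscreteTopology A]
    (X : Set (ℤ → A)) (K : ℝ)
    (hLR : IsLRSubshift K X) (hap : AperiodicSubshift X) :
    ∀ u ∈ lang X, ∀ w : List A,
      IsReturnWord (lang X) u w → (u.length : ℝ) / K < w.length := by
  classical
  obtain ⟨hmin, x, hxX, hUR, hLRb⟩ := hLR
  obtain ⟨⟨hXc, hXs⟩, hXne, -⟩ := id hmin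
  have htrans := Stmt10Aux.lang_subset hmin hxX
  intro u hu w hw
  obtain ⟨hwuL, hpre, hcnt⟩ := hw
  -- the return word `w` is nonempty
  have hwne : w ≠ [] := by
    intro h
    subst h
    rw [List.nil_append] at hcnt
    have hset : {i : ℕ | u <+: u.drop i ∧ i + u.length ≤ u.length} = {0} := by
      ext i
      simp only [Set.mem_setOf_eq, Set.mem_singleton_iff]
      constructor
      · rintro ⟨-, h2⟩
        omega
      · rintro rfl
        exact ⟨by simp, by omega⟩
    rw [occCount, hset, Set.ncard_singleton] at hcnt
    exact absurd hcnt (by omega)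
  set p : ℕ := w.length with hpdef
  have hp0 : 0 < p := List.length_pos_iff.2 hwne
  by_contra hcon
  push_neg at hcon
  -- `K` must be positive
  have hK : 0 < K := by
    by_contra hK0
    push_neg at hK0
    have h1 : (u.length : ℝ) / K ≤ 0 := div_nonpos_iff.2 (Or.inl ⟨by positivity, hK0⟩)
    have h2 : (1 : ℝ) ≤ (w.length : ℝ) := by exact_mod_cast hp0
    linarith
  have hKp : K * (p : ℝ) ≤ (u.length : ℝ) := by
    rw [le_div_iff₀ hK] at hcon
    rw [mul_comm]
    exact_mod_cast hcon
  -- an occurrence of `w ++ u` in the linearly recurrent point `x`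
  obtain ⟨y0, hy0X, hy0occ⟩ := hwuL
  obtain ⟨o, ho⟩ := htrans y0 hy0X (w ++ u) hy0occ
  have hoL := Stmt10Aux.occursAt_iff.1 ho
  have hlen : (w ++ u).length = p + u.length := by simp [hpdef, Nat.add_comm]
  -- `x` is `p`-periodic on `[o, E)` where `E = o + p + |u|`
  set E : ℤ := o + p + u.length with hEdef
  have hLper : ∀ j : ℕ, j < u.length → x (o + j) = x (o + ((j + p : ℕ) : ℤ)) := by
    intro j hj
    have e1 := hoL j (by rw [hlen]; omega)
    have e2 := hoL (j + p) (by rw [hlen]; omega)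
    have e3 : (w ++ u)[j]'(by rw [hlen]; omega) = u[j]'hj :=
      (List.IsPrefix.getElem hpre hj).symm
    have e4 : (w ++ u)[j + p]'(by rw [hlen]; omega) = u[j]'hj := by
      rw [List.getElem_append_right (by omega)]
      congr 1
      omega
    rw [e1, e2, e3, e4]
  have hzone0 : ∀ m : ℤ, o ≤ m → m + p < E → x m = x (m + p) := by
    intro m hm hmE
    have hjZ : (((m - o).toNat : ℕ) : ℤ) = m - o := Int.toNat_of_nonneg (by omega)
    have hju : (m - o).toNat < u.length := by omega
    have h1 := hLper (m - o).toNat hju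
    have e1 : o + (((m - o).toNat : ℕ) : ℤ) = m := by omega
    have e2 : o + (((m - o).toNat + p : ℕ) : ℤ) = m + p := by push_cast; omega
    rw [e1, e2] at h1
    exact h1
  -- either `x` is `p`-periodic on a left half-line (giving a periodic point), or
  -- there is a left-maximal periodic zone `[a, E)`.
  by_cases hbdd : ∃ b : ℤ, ∀ z : ℤ,
      (z ≤ o ∧ ∀ m : ℤ, z ≤ m → m + p < E → x m = x (m + p)) → b ≤ z
  swap
  · push_neg at hbdd
    have hfull : ∀ m : ℤ, m < E - p → x m = x (m + p) := by
      intro m hm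
      obtain ⟨z, hz, hzm⟩ := hbdd m
      exact hz.2 m (le_of_lt hzm) (by omega)
    obtain ⟨y, hyX, hyper⟩ :=
      Stmt10Aux.exists_periodic_point hXc hXs hxX hp0 (E - p) hfull
    exact hap y hyX p hp0 hyper
  obtain ⟨a, hPa, hleast⟩ := Int.exists_least_of_bdd hbdd ⟨o, le_rfl, hzone0⟩
  obtain ⟨hao, hzone⟩ := hPa
  have hex : ∃ m : ℤ, a - 1 ≤ m ∧ m + p < E ∧ x m ≠ x (m + p) := by
    by_contra hno
    push_neg at hno
    have hP1 : a - 1 ≤ o ∧ ∀ m : ℤ, a - 1 ≤ m → m + p < E → x m = x (m + p) :=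
      ⟨by omega, fun m hm hmE => hno m hm hmE⟩
    have := hleast _ hP1
    omega
  obtain ⟨m, hm1, hm2, hm3⟩ := hex
  have hma : m = a - 1 := by
    by_contra hmm
    exact hm3 (hzone m (by omega) hm2)
  subst hma
  -- the word `v = x[a-1, a-1+p)` and its occurrences
  set v : List A := Stmt10Aux.window x (a - 1) p with hvdef
  have hvlen : v.length = p := by simp [hvdef]
  have hvocc : OccursAt v x (a - 1) := Stmt10Aux.occursAt_window x (a - 1) p
  have hvL : v ∈ langSeq x := ⟨a - 1, hvocc⟩
  have hvget : ∀ j : ℕ, (hj : j < p) → v[j]'(by omega) = x (a - 1 + j) :=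
    fun j hj => Stmt10Aux.window_getElem x (a - 1) p j hj
  obtain ⟨N, hN⟩ := hUR v hvL
  have hQne : ∃ i : ℤ, a - 1 < i ∧ OccursAt v x i := by
    obtain ⟨j, hj1, _, hj3⟩ := hN a
    exact ⟨j, by omega, hj3⟩
  have hQbdd : ∃ b : ℤ, ∀ z : ℤ, (a - 1 < z ∧ OccursAt v x z) → b ≤ z :=
    ⟨a, fun z hz => by have := hz.1; omega⟩
  obtain ⟨i₂, ⟨hi₂a, hi₂occ⟩, hleast₂⟩ := Int.exists_least_of_bdd hQbdd hQne
  have hocc' : ∀ j : ℕ, j < p → x (i₂ + j) = x (a - 1 + j) := by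
    intro j hj
    have h1 := Stmt10Aux.occursAt_iff.1 hi₂occ j (by omega)
    rw [h1]
    exact hvget j hj
  -- `v` cannot reoccur inside the zone, so the next occurrence is beyond `E - p`
  have hi₂E : E < i₂ + p := by
    by_contra hle
    push_neg at hle
    exact Stmt10Aux.no_occ_in_zone hp0 x a E i₂ hzone hm3 hm2 (by omega) hle hocc'
  -- the return word `r = x[a-1, i₂)` to `v`
  set ℓ : ℕ := (i₂ - (a - 1)).toNat with hldef
  have hlZ : (ℓ : ℤ) = i₂ - (a - 1) := Int.toNat_of_nonneg (by omega)
  have hl1 : 1 ≤ ℓ := by omega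
  set r : List A := Stmt10Aux.window x (a - 1) ℓ with hrdef
  have hrlen : r.length = ℓ := by simp [hrdef]
  have hwin2 : Stmt10Aux.window x (a - 1 + ℓ) p = v := by
    rw [hvdef]
    apply List.ext_getElem (by simp)
    intro j h1 h2
    have hjp : j < p := by simpa using h2
    rw [Stmt10Aux.window_getElem x (a - 1 + ℓ) p j hjp,
      Stmt10Aux.window_getElem x (a - 1) p j hjp]
    have he : (a - 1 + (ℓ : ℤ)) + j = i₂ + j := by omega
    rw [he]
    exact hocc' j hjp
  have hsplit : Stmt10Aux.window x (a - 1) (ℓ + p) = r ++ v := by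
    rw [Stmt10Aux.window_append, hwin2, hrdef]
  have hrv_occ : OccursAt (r ++ v) x (a - 1) := by
    rw [← hsplit]
    exact Stmt10Aux.occursAt_window x (a - 1) (ℓ + p)
  have hretmem : (r ++ v) ∈ langSeq x := ⟨a - 1, hrv_occ⟩
  have hretpre : v <+: r ++ v := by
    rw [← hsplit, hvdef]
    exact Stmt10Aux.window_prefix x (a - 1) p (ℓ + p) (by omega)
  have hlenrv : (r ++ v).length = ℓ + p := by simp [hrdef, hvdef]
  have hretcnt : occCount v (r ++ v) = 2 := by
    have hset : {i : ℕ | v <+: (r ++ v).drop i ∧ i + v.length ≤ (r ++ v).length}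
        = {0, ℓ} := by
      ext i
      simp only [Set.mem_setOf_eq, Set.mem_insert_iff, Set.mem_singleton_iff]
      constructor
      · rintro ⟨h1, h2⟩
        rw [hvlen, hlenrv] at h2
        have hiℓ : i ≤ ℓ := by omega
        have hdropi : (r ++ v).drop i = Stmt10Aux.window x (a - 1 + i) (ℓ + p - i) := by
          rw [← hsplit]
          exact Stmt10Aux.window_drop x (a - 1) (ℓ + p) i (by omega)
        have hoccI : OccursAt v x (a - 1 + i) := by
          rw [Stmt10Aux.occursAt_iff]
          intro j hj
          have hjp : j < p := by omega
          have h3 := List.IsPrefix.getElem h1 hj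
          calc x ((a - 1 + (i : ℤ)) + j)
              = (Stmt10Aux.window x (a - 1 + i) (ℓ + p - i))[j]'(by simp; omega) :=
                (Stmt10Aux.window_getElem x (a - 1 + i) (ℓ + p - i) j (by omega)).symm
            _ = ((r ++ v).drop i)[j]'(by simp [hlenrv]; omega) :=
                (List.getElem_of_eq hdropi (by simp [hlenrv]; omega)).symm
            _ = v[j] := h3.symm
        rcases Nat.eq_zero_or_pos i with h0 | hipos
        · exact Or.inl h0
        · refine Or.inr ?_
          have hle := hleast₂ (a - 1 + i) ⟨by omega, hoccI⟩
          omega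
      · rintro (rfl | rfl)
        · exact ⟨by simpa using hretpre, by rw [hvlen, hlenrv]; omega⟩
        · constructor
          · rw [← hsplit, Stmt10Aux.window_drop x (a - 1) (ℓ + p) ℓ (by omega)]
            have hpp : ℓ + p - ℓ = p := by omega
            rw [hpp, hwin2]
          · rw [hvlen, hlenrv]
    rw [occCount, hset, Set.ncard_pair (by omega : (0 : ℕ) ≠ ℓ)]
  have hLRv := hLRb v hvL r ⟨hretmem, hretpre, hretcnt⟩
  -- numeric contradiction
  have hlow : (u.length : ℤ) + 2 ≤ (ℓ : ℤ) := by omega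
  have hlowR : (u.length : ℝ) + 2 ≤ (ℓ : ℝ) := by exact_mod_cast hlow
  have hup : (ℓ : ℝ) ≤ K * p := by
    rw [hrlen, hvlen] at hLRv
    exact_mod_cast hLRv
  linarith
end

section
/- Let (X, S) be the subshift of {0,1}^ℕ generated by the shift-orbit closure of the Morse sequence (the fixed point starting with 0 of the substitution σ(0) = 01, σ(1) = 10), and let ζ = {[0], [1]}. Then the lower local rate of Poincaré recurrence satisfies R̲_ζ(x) ≥ 1 for every x ∈ X. In particular, (X, S) is a zero-entropy system whose lower local rate of Poincaré recurrence is at least 1 everywhere, so the converse of the implication 'positive entropy implies lower rate ≥ 1 almost everywhere' is false. -/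
open MeasureTheory Filter Set
open scoped ENNReal

/-- The one-sided shift on `{0,1}^ℕ`. -/
def shiftN (x : ℕ → Bool) : ℕ → Bool := fun n => x (n + 1)

/-- `m` is the fixed point starting with `0` of the Morse substitution
`σ(0) = 01`, `σ(1) = 10` (with `false = 0`, `true = 1`): `σ(m) = m` reads
`m(2k) = m(k)` and `m(2k+1) = ¬ m(k)`. -/
def IsMorseSequence (m : ℕ → Bool) : Prop :=
  m 0 = false ∧ ∀ k : ℕ, m (2 * k) = m k ∧ m (2 * k + 1) = !m k

/-- The subshift generated by the shift-orbit closure of the sequence `m`. -/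
def orbitClosure (m : ℕ → Bool) : Set (ℕ → Bool) :=
  closure {y | ∃ k : ℕ, y = shiftN^[k] m}

/-- The atom `ζ_n(x)` of the refined partition `ζ ∨ S⁻¹ζ ∨ ⋯ ∨ S^{-n+1}ζ` of `X`,
where `ζ = {[0],[1]}` is the partition into `1`-cylinders. -/
def cylAtomN (X : Set (ℕ → Bool)) (n : ℕ) (x : ℕ → Bool) : Set (ℕ → Bool) :=
  {y ∈ X | ∀ k : ℕ, k < n → y k = x k}

/-- The lower local rate of Poincaré recurrence `R̲_ζ(x) = liminf_n τ(ζ_n(x))/n`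
for the partition `ζ = {[0],[1]}`. -/
noncomputable def lowerRateCylN (X : Set (ℕ → Bool)) (x : ℕ → Bool) : ℝ≥0∞ :=
  atTop.liminf fun n : ℕ => recOfSet shiftN (cylAtomN X n x) / (n : ℝ≥0∞)

/-- The Shannon entropy `H_μ(ζ_n)` of the refined partition `ζ_n` for the partition
`ζ = {[0],[1]}`; its atoms are the `n`-cylinders, indexed by words `w : Fin n → Bool`. -/
noncomputable def cylEntropy (μ : Measure (ℕ → Bool)) (n : ℕ) : ℝ :=
  ∑ w : Fin n → Bool,
    Real.negMulLog (μ {y | ∀ k : Fin n, y (k : ℕ) = w k}).toReal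

/-!
If the `n`-cylinder of a point of the orbit closure meets its image under `S^k` with `k < n`,
then some factor of the Morse sequence of length `n + k ≥ 2k + 1` has period `k`, i.e. the
sequence contains an overlap `a u a u a`. But the Morse sequence is overlap-free: an overlap of
even period descends through `σ` to one of half the period, and one of odd period `p ≥ 3`
forces three equal consecutive letters, while every factor of length three contains a block
`σ(a) ∈ {01, 10}`. Hence `τ(ζ_n(x)) ≥ n`.

For the entropy, every factor of length `n` of `m = σ(m)` is a window of `σ(v)` for a factor
`v` of length `⌊n/2⌋ + 1`, so the factor complexity satisfies `p(n) ≤ 2 p(⌊n/2⌋ + 1)` and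
hence `p(n) ≤ 2n²`. A measure carried by the subshift gives mass only to cylinders of factors,
so by concavity of `-t log t` we get `H_μ(ζ_n) ≤ log p(n) = O(log n)`.
-/

open Finset

theorem shiftN_iterate_apply (x : ℕ → Bool) (r n : ℕ) : shiftN^[r] x n = x (n + r) := by
  induction r generalizing x with
  | zero => rfl
  | succ r ih => rw [Function.iterate_succ_apply, ih]; rfl

theorem exists_eq_shift_of_mem_orbitClosure {m y : ℕ → Bool} (hy : y ∈ orbitClosure m)
    (N : ℕ) : ∃ r, ∀ k < N, y k = m (r + k) := by
  have hopen : IsOpen ((Finset.range N : Set ℕ).pi fun k => {y k}) :=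
    isOpen_set_pi (Finset.range N).finite_toSet fun _ _ => isOpen_discrete _
  obtain ⟨_, hz, r, rfl⟩ := mem_closure_iff.1 hy _ hopen fun k _ => rfl
  refine ⟨r, fun k hk => ?_⟩
  have hk := hz k (by simpa using hk)
  rw [Set.mem_singleton_iff, shiftN_iterate_apply] at hk
  rw [← hk, add_comm]

/-- `m` contains no overlap `a u a u a`, where `p = |a u|`. -/
def OverlapFree (m : ℕ → Bool) : Prop :=
  ∀ i p : ℕ, 0 < p → ¬ ∀ j ≤ p, m (i + j) = m (i + j + p)

theorem natCast_le_recOfSet_cylAtomN {m : ℕ → Bool} (hfree : OverlapFree m)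
    (x : ℕ → Bool) (n : ℕ) :
    (n : ℝ≥0∞) ≤ recOfSet shiftN (cylAtomN (orbitClosure m) n x) := by
  refine le_sInf ?_
  rintro _ ⟨k, hk, ⟨_, ⟨y, ⟨hyX, hyx⟩, rfl⟩, -, hSy⟩, rfl⟩
  by_contra! hkn
  have hkn : k < n := by exact_mod_cast hkn
  obtain ⟨r, hr⟩ := exists_eq_shift_of_mem_orbitClosure hyX (n + k)
  refine hfree r k hk fun j hj => ?_
  have hper : y j = y (j + k) := by
    rw [hyx j (by omega), ← hSy j (by omega), shiftN_iterate_apply]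
  rw [← hr j (by omega), hper, hr (j + k) (by omega), add_assoc]

theorem one_le_lowerRateCylN {m : ℕ → Bool} (hfree : OverlapFree m) (x : ℕ → Bool) :
    1 ≤ lowerRateCylN (orbitClosure m) x := by
  refine le_liminf_of_le (by isBoundedDefault) ?_
  filter_upwards [eventually_ge_atTop 1] with n hn
  have hn0 : (n : ℝ≥0∞) ≠ 0 := by exact_mod_cast (by omega : n ≠ 0)
  rw [ENNReal.le_div_iff_mul_le (Or.inl hn0) (Or.inl (ENNReal.natCast_ne_top n)), one_mul]
  exact natCast_le_recOfSet_cylAtomN hfree x n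

open Classical in
noncomputable def factors (m : ℕ → Bool) (n : ℕ) : Finset (Fin n → Bool) :=
  univ.filter fun w => ∃ i, ∀ k : Fin n, m (i + k) = w k

theorem mem_factors {m : ℕ → Bool} {n : ℕ} {w : Fin n → Bool} :
    w ∈ factors m n ↔ ∃ i, ∀ k : Fin n, m (i + k) = w k := by
  simp [factors]

theorem measure_cylinder_eq_zero_of_notMem_factors {m : ℕ → Bool} {μ : Measure (ℕ → Bool)}
    (hX : μ (orbitClosure m)ᶜ = 0) {n : ℕ} {w : Fin n → Bool} (hw : w ∉ factors m n) :
    μ {y | ∀ k : Fin n, y k = w k} = 0 := by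
  refine measure_mono_null
    (fun y (hy : ∀ k : Fin n, y k = w k) (hyX : y ∈ orbitClosure m) => hw ?_) hX
  obtain ⟨r, hr⟩ := exists_eq_shift_of_mem_orbitClosure hyX n
  exact mem_factors.2 ⟨r, fun k => (hr k k.isLt).symm.trans (hy k)⟩

theorem sum_negMulLog_le_log_card {ι : Type*} (s : Finset ι) (p : ι → ℝ)
    (h0 : ∀ i ∈ s, 0 ≤ p i) (h1 : ∑ i ∈ s, p i = 1) :
    ∑ i ∈ s, Real.negMulLog (p i) ≤ Real.log #s := by
  have hs : (0 : ℝ) < #s := by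
    rcases s.eq_empty_or_nonempty with rfl | hne
    · simp at h1
    · exact_mod_cast hne.card_pos
  have hJensen := Real.concaveOn_negMulLog.le_map_sum (t := s) (w := fun _ => (#s : ℝ)⁻¹)
    (p := p) (fun _ _ => by positivity) (by simp [hs.ne']) (fun i hi => h0 i hi)
  have hvalue : Real.negMulLog (#s : ℝ)⁻¹ = (#s : ℝ)⁻¹ * Real.log #s := by
    simp [Real.negMulLog, Real.log_inv]
  simp only [smul_eq_mul, ← mul_sum, h1, mul_one, hvalue] at hJensen
  exact le_of_mul_le_mul_left hJensen (inv_pos.2 hs)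

def window (n : ℕ) (y : ℕ → Bool) : Fin n → Bool := fun k => y k

theorem sum_measure_cylinder (μ : Measure (ℕ → Bool)) [IsProbabilityMeasure μ] (n : ℕ) :
    ∑ w : Fin n → Bool, μ {y | ∀ k : Fin n, y k = w k} = 1 := by
  have hcyl (w : Fin n → Bool) : {y | ∀ k : Fin n, y k = w k} = window n ⁻¹' {w} := by
    ext y
    simp [window, funext_iff]
  have hwindow : Measurable (window n) := measurable_pi_lambda _ fun k => measurable_pi_apply _
  simp only [hcyl]
  rw [sum_measure_preimage_singleton _ fun w _ => hwindow (measurableSet_singleton w)]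
  simp

theorem cylEntropy_le_log_card (μ : Measure (ℕ → Bool)) [IsProbabilityMeasure μ] {n : ℕ}
    (s : Finset (Fin n → Bool)) (hs : ∀ w ∉ s, μ {y | ∀ k : Fin n, y k = w k} = 0) :
    cylEntropy μ n ≤ Real.log #s := by
  have hsum : ∑ w ∈ s, (μ {y | ∀ k : Fin n, y k = w k}).toReal = 1 := by
    rw [sum_subset (subset_univ s) fun w _ hw => by simp [hs w hw],
      ← ENNReal.toReal_sum fun _ _ => measure_ne_top _ _, sum_measure_cylinder,
      ENNReal.toReal_one]
  rw [cylEntropy, ← sum_subset (subset_univ s) fun w _ hw => by simp [hs w hw]]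
  exact sum_negMulLog_le_log_card s _ (fun _ _ => ENNReal.toReal_nonneg) hsum

theorem cylEntropy_nonneg (μ : Measure (ℕ → Bool)) [IsProbabilityMeasure μ] (n : ℕ) :
    0 ≤ cylEntropy μ n :=
  sum_nonneg fun _ _ => Real.negMulLog_nonneg ENNReal.toReal_nonneg
    (ENNReal.toReal_le_of_le_ofReal zero_le_one (by simpa using prob_le_one))

theorem tendsto_cylEntropy_div_of_support (μ : Measure (ℕ → Bool)) [IsProbabilityMeasure μ]
    (L : ∀ n, Finset (Fin n → Bool))
    (hL : ∀ n, ∀ w ∉ L n, μ {y | ∀ k : Fin n, y k = w k} = 0)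
    (hgrowth : Tendsto (fun n : ℕ => Real.log #(L n) / n) atTop (nhds 0)) :
    Tendsto (fun n : ℕ => cylEntropy μ n / n) atTop (nhds 0) :=
  squeeze_zero (fun n => div_nonneg (cylEntropy_nonneg μ n) n.cast_nonneg)
    (fun n => div_le_div_of_nonneg_right (cylEntropy_le_log_card μ (L n) (hL n)) n.cast_nonneg)
    hgrowth

def IsFixedByMorseSubst (m : ℕ → Bool) : Prop :=
  ∀ k, m (2 * k) = m k ∧ m (2 * k + 1) = !m k

/-- The window of length `n` of `σ(v)` starting at position `b`. -/
def substWindow (n : ℕ) (v : Fin (n / 2 + 1) → Bool) (b : Fin 2) : Fin n → Bool :=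
  fun j => xor (v ⟨(b + j) / 2, by omega⟩) (decide ((b + j : ℕ) % 2 = 1))

section Morse

variable {m : ℕ → Bool}

theorem morse_apply_eq_xor (hm : IsFixedByMorseSubst m) (n : ℕ) :
    m n = xor (m (n / 2)) (decide (n % 2 = 1)) := by
  obtain ⟨k, rfl | rfl⟩ := Nat.even_or_odd' n
  · simp [(hm k).1]
  · rw [(hm k).2, show (2 * k + 1) / 2 = k by omega]
    simp

theorem morse_two_mul_ne (hm : IsFixedByMorseSubst m) (k : ℕ) : m (2 * k) ≠ m (2 * k + 1) := by
  rw [(hm k).1, (hm k).2]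
  cases m k <;> decide

theorem morse_not_three_eq (hm : IsFixedByMorseSubst m) (a : ℕ) :
    ¬ (m a = m (a + 1) ∧ m (a + 1) = m (a + 2)) := by
  rintro ⟨h₁, h₂⟩
  obtain ⟨k, rfl | rfl⟩ := Nat.even_or_odd' a
  · exact morse_two_mul_ne hm k h₁
  · rw [show 2 * k + 1 + 1 = 2 * (k + 1) by ring, show 2 * k + 1 + 2 = 2 * (k + 1) + 1 by ring]
      at h₂
    exact morse_two_mul_ne hm (k + 1) h₂

theorem morse_eq_iff_half_eq (hm : IsFixedByMorseSubst m) {A B : ℕ} (h : A % 2 = B % 2) :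
    m A = m B ↔ m (A / 2) = m (B / 2) := by
  rw [morse_apply_eq_xor hm A, morse_apply_eq_xor hm B, h, Bool.xor_left_inj]

/- One of `A`, `B` is the start `2e` of a block `σ(a)`, across which `m` changes; so `m` also
changes from `2o + 1` to `2o + 2`, which is `¬m o ≠ m (o + 1)`. -/
theorem morse_eq_succ_of_iff (hm : IsFixedByMorseSubst m) {A B o : ℕ}
    (ho : A = 2 * o + 1 ∧ B % 2 = 0 ∨ B = 2 * o + 1 ∧ A % 2 = 0)
    (h : m A = m (A + 1) ↔ m B = m (B + 1)) : m o = m (o + 1) := by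
  have hodd : m (2 * o + 1) ≠ m (2 * o + 1 + 1) := by
    rcases ho with ⟨rfl, hB⟩ | ⟨rfl, hA⟩
    · obtain ⟨e, rfl⟩ : ∃ e, B = 2 * e := ⟨B / 2, by omega⟩
      exact fun h' => morse_two_mul_ne hm e (h.1 h')
    · obtain ⟨e, rfl⟩ : ∃ e, A = 2 * e := ⟨A / 2, by omega⟩
      exact fun h' => morse_two_mul_ne hm e (h.2 h')
  rw [show 2 * o + 1 + 1 = 2 * (o + 1) by ring, (hm o).2, (hm (o + 1)).1] at hodd
  revert hodd
  cases m o <;> cases m (o + 1) <;> decide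

theorem overlapFree_of_morse (hm : IsFixedByMorseSubst m) : OverlapFree m := by
  intro i p
  induction p using Nat.strong_induction_on generalizing i with
  | _ p ih =>
  intro hp H
  obtain ⟨q, rfl | rfl⟩ := Nat.even_or_odd' p
  · refine ih q (by omega) (i / 2) (by omega) fun j hj => ?_
    have := (morse_eq_iff_half_eq hm (by omega)).1 (H (2 * j) (by omega))
    rwa [show (i + 2 * j) / 2 = i / 2 + j by omega,
      show (i + 2 * j + 2 * q) / 2 = i / 2 + j + q by omega] at this
  rcases Nat.eq_zero_or_pos q with rfl | hq
  · exact morse_not_three_eq hm i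
      ⟨by simpa using H 0 (by omega), by simpa using H 1 (by omega)⟩
  have hshift : ∀ j < 2 * q + 1,
      (m (i + j) = m (i + j + 1) ↔ m (i + j + (2 * q + 1)) = m (i + j + (2 * q + 1) + 1)) := by
    intro j hj
    rw [H j hj.le, show i + j + 1 = i + (j + 1) by ring, H (j + 1) hj,
      show i + (j + 1) + (2 * q + 1) = i + j + (2 * q + 1) + 1 by ring]
  obtain ⟨o, ho⟩ : ∃ o, i = 2 * o + 1 ∨ i + 2 * q = 2 * o := by
    obtain ⟨a, rfl | rfl⟩ := Nat.even_or_odd' i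
    exacts [⟨a + q, by omega⟩, ⟨a, by omega⟩]
  exact morse_not_three_eq hm o
    ⟨morse_eq_succ_of_iff hm (by omega) (hshift 0 (by omega)),
      morse_eq_succ_of_iff hm (by omega) (hshift 2 (by omega))⟩

theorem factors_subset_image_substWindow (hm : IsFixedByMorseSubst m) (n : ℕ) :
    factors m n ⊆
      (factors m (n / 2 + 1) ×ˢ (univ : Finset (Fin 2))).image fun vb =>
        substWindow n vb.1 vb.2 := by
  intro w hw
  obtain ⟨i, hi⟩ := mem_factors.1 hw
  refine mem_image.2 ⟨(fun k => m (i / 2 + k), ⟨i % 2, by omega⟩),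
    mem_product.2 ⟨mem_factors.2 ⟨i / 2, fun _ => rfl⟩, mem_univ _⟩, funext fun j => ?_⟩
  rw [← hi j, morse_apply_eq_xor hm, show (i + j) / 2 = i / 2 + (i % 2 + j) / 2 by omega,
    show (i + j) % 2 = (i % 2 + j) % 2 by omega]
  rfl

theorem card_factors_le_two_mul (hm : IsFixedByMorseSubst m) (n : ℕ) :
    #(factors m n) ≤ 2 * #(factors m (n / 2 + 1)) :=
  (Finset.card_le_card (factors_subset_image_substWindow hm n)).trans
    (card_image_le.trans (by simp [mul_comm]))

theorem card_factors_le (hm : IsFixedByMorseSubst m) {n : ℕ} (hn : 1 ≤ n) :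
    #(factors m n) ≤ 2 * n ^ 2 := by
  induction n using Nat.strong_induction_on with
  | _ n ih =>
  by_cases hsmall : n ≤ 4
  · calc #(factors m n) ≤ 2 ^ n := (card_le_univ _).trans (by simp)
      _ ≤ 2 * n ^ 2 := by interval_cases n <;> norm_num
  calc #(factors m n) ≤ 2 * #(factors m (n / 2 + 1)) := card_factors_le_two_mul hm n
    _ ≤ 2 * (2 * (n / 2 + 1) ^ 2) := by gcongr; exact ih _ (by omega) (by omega)
    _ ≤ 2 * n ^ 2 := by
      obtain ⟨h, rfl | rfl⟩ := Nat.even_or_odd' n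
      · rw [show 2 * h / 2 = h by omega]
        nlinarith
      · rw [show (2 * h + 1) / 2 = h by omega]
        nlinarith

theorem tendsto_log_card_factors_div (hm : IsFixedByMorseSubst m) :
    Tendsto (fun n : ℕ => Real.log #(factors m n) / n) atTop (nhds 0) := by
  have hbound : Tendsto (fun n : ℕ => (Real.log 2 + 2 * Real.log n) / n) atTop (nhds 0) := by
    have hlog : Tendsto (fun n : ℕ => Real.log n / n) atTop (nhds 0) :=
      Real.isLittleO_log_id_atTop.tendsto_div_nhds_zero.comp tendsto_natCast_atTop_atTop
    simpa [add_div, mul_div_assoc] using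
      (tendsto_const_div_atTop_nhds_zero_nat (Real.log 2)).add (hlog.const_mul 2)
  refine squeeze_zero' (.of_forall fun n => div_nonneg (Real.log_natCast_nonneg _) n.cast_nonneg)
    ?_ hbound
  filter_upwards [eventually_ge_atTop 1] with n hn
  have hpos : 0 < #(factors m n) := card_pos.2 ⟨_, mem_factors.2 ⟨0, fun _ => rfl⟩⟩
  gcongr
  calc Real.log #(factors m n) ≤ Real.log (2 * n ^ 2 : ℕ) :=
        Real.log_le_log (by exact_mod_cast hpos) (by exact_mod_cast card_factors_le hm hn)
    _ = Real.log 2 + 2 * Real.log n := by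
        push_cast
        rw [Real.log_mul two_ne_zero (by positivity), Real.log_pow, Nat.cast_ofNat]

end Morse

/-- Let `(X,S)` be the subshift generated by the shift-orbit
closure of the Morse sequence and `ζ = {[0],[1]}`. Then `R̲_ζ(x) ≥ 1` for every
`x ∈ X`, while the system has zero entropy: `h_μ(S,ζ) = 0` for every invariant
probability measure `μ` on `X`. Hence the converse of `h_μ(T,ζ) > 0 ⟹ R̲_ζ ≥ 1 a.e.`
is false. -/
theorem stmt14 (m : ℕ → Bool) (hm : IsMorseSequence m) :
    (∀ x ∈ orbitClosure m, 1 ≤ lowerRateCylN (orbitClosure m) x) ∧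
      ∀ μ : Measure (ℕ → Bool), IsProbabilityMeasure μ →
        MeasurePreserving shiftN μ μ → μ (orbitClosure m) = 1 →
        Tendsto (fun n : ℕ => cylEntropy μ n / n) atTop (nhds 0) := by
  refine ⟨fun x _ => one_le_lowerRateCylN (overlapFree_of_morse hm.2) x, fun μ _ _ hX => ?_⟩
  have hXc : μ (orbitClosure m)ᶜ = 0 :=
    (prob_compl_eq_zero_iff isClosed_closure.measurableSet).2 hX
  exact tendsto_cylEntropy_div_of_support μ (factors m)
    (fun _ _ => measure_cylinder_eq_zero_of_notMem_factors hXc) (tendsto_log_card_factors_div hm.2)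
end
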